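/- If f ∈ L²(μ) satisfies E(Cov_n(f,f|I)) → 0 as n → ∞, then for every g ∈ L²(μ), E(Cov_n(f,g|I)) → 0 as n → ∞. -/

import Mathlib

/-!
Let `U` be the Koopman isometry `φ ↦ φ ∘ T` of `L²(μ)` and `P` the orthogonal projection onto the
`T`-invariant functions, i.e. the conditional expectation given `I`; `U` fixes the range of `P`.
With `h = f - P f` one gets `E(Cov_n(f,g|I)) = ⟪h, Uⁿ g⟫ = ⟪U*ⁿ h, g⟫`, so the claim is that
`U*ⁿ h → 0` weakly as soon as `⟪U*ⁿ h, h⟫ → 0`. For an isometry `V` one has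
`‖x - V V* x‖² = ‖x‖² - ‖V* x‖²`; with `V = Uᵐ`, `x = U*ⁿ h` the right side tends to `0` because
`‖U*ⁿ h‖` decreases, and this turns the hypothesis into `⟪U*ⁿ h, U*ᵐ h⟫ → 0` for every `m`.
As `U*ⁿ h` is bounded, this extends to the closed span of the `U*ᵐ h`, and it holds trivially on
the orthogonal complement of that span.
-/

open MeasureTheory Filter Topology

noncomputable section

/-- The σ-algebra of invariant measurable sets of `T`. -/
def invSigma {Ω : Type*} [MeasurableSpace Ω] (T : Ω → Ω) : MeasurableSpace Ω where
  MeasurableSet' A := MeasurableSet A ∧ T ⁻¹' A = A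
  measurableSet_empty := ⟨MeasurableSet.empty, by simp⟩
  measurableSet_compl := fun A hA => ⟨hA.1.compl, by rw [Set.preimage_compl, hA.2]⟩
  measurableSet_iUnion := fun f hf =>
    ⟨MeasurableSet.iUnion fun i => (hf i).1, by
      rw [Set.preimage_iUnion]
      exact Set.iUnion_congr fun i => (hf i).2⟩

/-- `E(Cov_n(f,g|I)) = ∫ conj(f)·(g∘T^n) dμ − ∫ conj(E(f|I))·E(g|I) dμ`. -/
def expCovInv {Ω : Type*} [MeasurableSpace Ω] (μ : Measure Ω) (T : Ω → Ω)
    (f g : Ω → ℂ) (n : ℕ) : ℂ :=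
  (∫ x, (starRingEnd ℂ) (f x) * g (T^[n] x) ∂μ) -
    ∫ x, (starRingEnd ℂ) ((μ[f | invSigma T]) x) * (μ[g | invSigma T]) x ∂μ

open scoped InnerProductSpace

section WeakConvergence

variable {𝕜 E : Type*} [RCLike 𝕜] [NormedAddCommGroup E] [InnerProductSpace 𝕜 E]
  [CompleteSpace E]

theorem tendsto_inner_zero_of_norm_le_of_forall_tendsto_inner {y : ℕ → E} {C : ℝ}
    (hC : ∀ n, ‖y n‖ ≤ C) (hy : ∀ m, Tendsto (fun n => ⟪y n, y m⟫_𝕜) atTop (𝓝 0)) (w : E) :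
    Tendsto (fun n => ⟪y n, w⟫_𝕜) atTop (𝓝 0) := by
  let S : Submodule 𝕜 E :=
    { carrier := {w | Tendsto (fun n => ⟪y n, w⟫_𝕜) atTop (𝓝 0)}
      add_mem' := fun hv hw => by
        simpa only [Set.mem_ofPred_eq, inner_add_right, add_zero] using hv.add hw
      zero_mem' := by simpa only [Set.mem_ofPred_eq, inner_zero_right] using tendsto_const_nhds
      smul_mem' := fun c v hv => by
        simpa only [Set.mem_ofPred_eq, inner_smul_right, mul_zero] using hv.const_mul c }
  have hS : IsClosed (S : Set E) := by
    have hbdd : ∃ C, ∀ n, ‖innerSL 𝕜 (y n)‖ ≤ C :=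
      ⟨C, fun n => (innerSL_apply_norm 𝕜 (y n)).trans_le (hC n)⟩
    have hequi := ((NormedSpace.equicontinuous_TFAE fun n => innerSL 𝕜 (y n)).out 5 1).mp hbdd
    exact hequi.isClosed_setOfPred_tendsto (f := fun _ => 0) continuous_const
  let K := (Submodule.span 𝕜 (Set.range y)).topologicalClosure
  have hyK : ∀ n, y n ∈ K := fun n =>
    Submodule.le_topologicalClosure _ (Submodule.subset_span ⟨n, rfl⟩)
  have hKS : K ≤ S :=
    Submodule.topologicalClosure_minimal _ (Submodule.span_le.mpr (Set.range_subset_iff.mpr hy)) hS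
  have hKperpS : Kᗮ ≤ S := fun v hv =>
    tendsto_const_nhds.congr fun n => (Submodule.inner_right_of_mem_orthogonal (hyK n) hv).symm
  have hKKperp : K ⊔ Kᗮ = ⊤ := Submodule.sup_orthogonal_of_hasOrthogonalProjection
  exact sup_le hKS hKperpS (hKKperp ▸ Submodule.mem_top : w ∈ K ⊔ Kᗮ)

end WeakConvergence

namespace ContinuousLinearMap

theorem norm_pow_apply {R M : Type*} [Semiring R] [SeminormedAddCommGroup M] [Module R M]
    {U : M →L[R] M} (hU : ∀ x, ‖U x‖ = ‖x‖) (n : ℕ) (x : M) : ‖(U ^ n) x‖ = ‖x‖ := by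
  induction n with
  | zero => rfl
  | succ n ih => rw [pow_succ', mul_apply_eq_comp, hU, ih]

variable {𝕜 E F : Type*} [RCLike 𝕜] [NormedAddCommGroup E] [InnerProductSpace 𝕜 E]
  [CompleteSpace E] [NormedAddCommGroup F] [InnerProductSpace 𝕜 F] [CompleteSpace F]

theorem adjoint_pow (U : E →L[𝕜] E) (n : ℕ) : adjoint (U ^ n) = adjoint U ^ n := by
  simpa only [star_eq_adjoint] using star_pow U n

theorem norm_adjoint_apply_le {V : F →L[𝕜] E} (hV : ∀ x, ‖V x‖ = ‖x‖) (x : E) :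
    ‖adjoint V x‖ ≤ ‖x‖ := by
  refine (le_opNorm _ x).trans (mul_le_of_le_one_left (norm_nonneg x) ?_)
  rw [LinearIsometryEquiv.norm_map]
  exact opNorm_le_bound _ zero_le_one fun x => by rw [hV, one_mul]

theorem norm_sub_apply_adjoint_apply_sq {V : F →L[𝕜] E} (hV : ∀ x, ‖V x‖ = ‖x‖) (x : E) :
    ‖x - V (adjoint V x)‖ ^ 2 = ‖x‖ ^ 2 - ‖adjoint V x‖ ^ 2 := by
  rw [@norm_sub_sq 𝕜, hV, ← adjoint_inner_left, inner_self_eq_norm_sq]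
  ring

theorem tendsto_inner_adjoint_pow_apply_adjoint_pow_apply {U : E →L[𝕜] E}
    (hU : ∀ x, ‖U x‖ = ‖x‖) {h : E}
    (hh : Tendsto (fun n => ⟪(adjoint U ^ n) h, h⟫_𝕜) atTop (𝓝 0)) (m : ℕ) :
    Tendsto (fun n => ⟪(adjoint U ^ n) h, (adjoint U ^ m) h⟫_𝕜) atTop (𝓝 0) := by
  set A := adjoint U
  have hUm : ∀ x, ‖(U ^ m) x‖ = ‖x‖ := norm_pow_apply hU m
  have hA : adjoint (U ^ m) = A ^ m := adjoint_pow U m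
  have hAn : ∀ n, (A ^ (n + m)) h = (A ^ m) ((A ^ n) h) := fun n => by
    rw [add_comm, pow_add, mul_apply_eq_comp]
  obtain ⟨L, hL⟩ : ∃ L, Tendsto (fun n => ‖(A ^ n) h‖) atTop (𝓝 L) := by
    refine ⟨_, tendsto_atTop_ciInf (antitone_nat_of_succ_le fun n => ?_) ⟨0, ?_⟩⟩
    · rw [pow_succ', mul_apply_eq_comp]
      exact norm_adjoint_apply_le hU _
    · rintro _ ⟨n, rfl⟩
      exact norm_nonneg _
  set d : ℕ → E := fun n => (A ^ n) h - (U ^ m) ((A ^ m) ((A ^ n) h))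
  have hd : Tendsto (fun n => ‖d n‖) atTop (𝓝 0) := by
    have hsq : Tendsto (fun n => ‖d n‖ ^ 2) atTop (𝓝 0) := by
      have hdiff := (hL.pow 2).sub ((hL.comp (tendsto_add_atTop_nat m)).pow 2)
      rw [sub_self] at hdiff
      refine hdiff.congr fun n => ?_
      simp only [d, Function.comp_apply, hAn, ← hA]
      exact (norm_sub_apply_adjoint_apply_sq hUm _).symm
    simpa only [Real.sqrt_sq (norm_nonneg _), Real.sqrt_zero] using hsq.sqrt
  have hdefect : ∀ n, ⟪(A ^ n) h, h⟫_𝕜 - ⟪(A ^ (n + m)) h, (A ^ m) h⟫_𝕜 = ⟪d n, h⟫_𝕜 :=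
    fun n => by rw [hAn, ← hA, adjoint_inner_right, hA, inner_sub_left]
  have hshift : Tendsto (fun n => ⟪(A ^ (n + m)) h, (A ^ m) h⟫_𝕜) atTop (𝓝 0) := by
    have hsmall : Tendsto (fun n => ⟪d n, h⟫_𝕜) atTop (𝓝 0) :=
      squeeze_zero_norm (fun n => norm_inner_le_norm (d n) h) (by simpa using hd.mul_const ‖h‖)
    have hlim := hh.sub hsmall
    rw [sub_zero] at hlim
    exact hlim.congr fun n => by rw [← hdefect, sub_sub_cancel]
  exact (tendsto_add_atTop_iff_nat m).mp hshift

theorem tendsto_inner_pow_apply_of_tendsto_inner_pow_apply_self {U : E →L[𝕜] E}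
    (hU : ∀ x, ‖U x‖ = ‖x‖) {h : E} (hh : Tendsto (fun n => ⟪h, (U ^ n) h⟫_𝕜) atTop (𝓝 0))
    (w : E) : Tendsto (fun n => ⟪h, (U ^ n) w⟫_𝕜) atTop (𝓝 0) := by
  have hadj : ∀ n v, ⟪h, (U ^ n) v⟫_𝕜 = ⟪(adjoint U ^ n) h, v⟫_𝕜 := fun n v => by
    rw [← adjoint_pow, adjoint_inner_left]
  simp only [hadj] at hh ⊢
  refine tendsto_inner_zero_of_norm_le_of_forall_tendsto_inner (C := ‖h‖) (fun n => ?_)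
    (tendsto_inner_adjoint_pow_apply_adjoint_pow_apply hU hh) w
  rw [← adjoint_pow]
  exact norm_adjoint_apply_le (norm_pow_apply hU n) h

theorem tendsto_inner_pow_apply_sub_inner_starProjection {U : E →L[𝕜] E}
    (hU : ∀ x, ‖U x‖ = ‖x‖) {K : Submodule 𝕜 E} [K.HasOrthogonalProjection]
    (hK : ∀ v ∈ K, U v = v) {x : E}
    (hx : Tendsto (fun n => ⟪x, (U ^ n) x⟫_𝕜 - ⟪K.starProjection x, K.starProjection x⟫_𝕜)
      atTop (𝓝 0)) (w : E) :
    Tendsto (fun n => ⟪x, (U ^ n) w⟫_𝕜 - ⟪K.starProjection x, K.starProjection w⟫_𝕜)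
      atTop (𝓝 0) := by
  set P := K.starProjection
  have hPx : P x ∈ K := K.starProjection_apply_mem x
  have hUPx : ∀ n, (U ^ n) (P x) = P x := fun n => by
    induction n with
    | zero => rfl
    | succ n ih => rw [pow_succ', mul_apply_eq_comp, ih, hK _ hPx]
  have hinner : ∀ n u v, ⟪(U ^ n) u, (U ^ n) v⟫_𝕜 = ⟪u, v⟫_𝕜 :=
    fun n => (LinearMap.norm_map_iff_inner_map_map (U ^ n)).mp (norm_pow_apply hU n)
  have hcov : ∀ n v, ⟪x, (U ^ n) v⟫_𝕜 - ⟪P x, P v⟫_𝕜 = ⟪x - P x, (U ^ n) v⟫_𝕜 := fun n v => by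
    rw [inner_sub_left, ← K.inner_starProjection_left_eq_right,
      K.starProjection_eq_self_iff.mpr hPx, ← hinner n (P x) v, hUPx]
  have hself : ∀ n, ⟪x - P x, (U ^ n) x⟫_𝕜 = ⟪x - P x, (U ^ n) (x - P x)⟫_𝕜 := fun n => by
    rw [map_sub, inner_sub_right, hUPx, K.starProjection_inner_eq_zero x _ hPx, sub_zero]
  simp only [hcov, hself] at hx ⊢
  exact tendsto_inner_pow_apply_of_tendsto_inner_pow_apply_self hU hx w

end ContinuousLinearMap

namespace MeasureTheory

variable {Ω : Type*} [MeasurableSpace Ω] {T : Ω → Ω}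

theorem invSigma_le : invSigma T ≤ ‹MeasurableSpace Ω› := fun _ hs => hs.1

-- Makes `lpMeas` for `invSigma T` complete, so that it has an orthogonal projection.
instance : Fact (invSigma T ≤ ‹MeasurableSpace Ω›) := ⟨invSigma_le⟩

theorem StronglyMeasurable.apply_eq_of_invSigma {β : Type*} [TopologicalSpace β] [T2Space β]
    {φ : Ω → β} (hφ : StronglyMeasurable[invSigma T] φ) (x : Ω) : φ (T x) = φ x := by
  have hsimple : ∀ n y, hφ.approx n (T y) = hφ.approx n y := fun n y => by
    have hfiber :=
      (@SimpleFunc.measurableSet_fiber _ _ (invSigma T) (hφ.approx n) (hφ.approx n y)).2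
    exact (Set.ext_iff.mp hfiber y).mpr rfl
  exact tendsto_nhds_unique (by simpa only [hsimple] using hφ.tendsto_approx (T x))
    (hφ.tendsto_approx x)

theorem integral_conj_mul_eq_inner {𝕜 : Type*} [RCLike 𝕜] {μ : Measure Ω} {f g : Ω → 𝕜}
    {F G : Lp 𝕜 2 μ} (hF : F =ᵐ[μ] f) (hG : G =ᵐ[μ] g) :
    ∫ x, starRingEnd 𝕜 (f x) * g x ∂μ = ⟪F, G⟫_𝕜 := by
  rw [L2.inner_def]
  refine integral_congr_ae ?_
  filter_upwards [hF, hG] with x hFx hGx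
  rw [RCLike.inner_apply', hFx, hGx]

section Koopman

variable {μ : Measure Ω} (𝕜 : Type*) {E : Type*} [RCLike 𝕜] [NormedAddCommGroup E]
  [NormedSpace 𝕜 E] {p : ENNReal} [Fact (1 ≤ p)]

def koopman (hT : MeasurePreserving T μ μ) : Lp E p μ →L[𝕜] Lp E p μ :=
  (Lp.compMeasurePreservingₗᵢ 𝕜 T hT).toContinuousLinearMap

variable {𝕜}

theorem koopman_apply (hT : MeasurePreserving T μ μ) (φ : Lp E p μ) :
    koopman 𝕜 hT φ = Lp.compMeasurePreserving T hT φ := rfl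

theorem norm_koopman_apply (hT : MeasurePreserving T μ μ) (φ : Lp E p μ) :
    ‖koopman 𝕜 hT φ‖ = ‖φ‖ :=
  Lp.norm_compMeasurePreserving φ hT

theorem koopman_pow_apply (hT : MeasurePreserving T μ μ) (n : ℕ) (φ : Lp E p μ) :
    (koopman 𝕜 hT ^ n) φ = Lp.compMeasurePreserving T^[n] (hT.iterate n) φ := by
  induction n with
  | zero => exact (Lp.compMeasurePreserving_id_apply φ).symm
  | succ n ih =>
    rw [pow_succ', mul_apply_eq_comp, ih, koopman_apply,
      ← Lp.compMeasurePreserving_comp_apply φ (hT.iterate n) hT]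
    rfl

theorem coeFn_koopman_pow_toLp (hT : MeasurePreserving T μ μ) (n : ℕ) {g : Ω → E}
    (hg : MemLp g p μ) : (koopman 𝕜 hT ^ n) (hg.toLp g) =ᵐ[μ] fun x => g (T^[n] x) := by
  rw [koopman_pow_apply, Lp.toLp_compMeasurePreserving]
  exact MemLp.coeFn_toLp _

theorem koopman_apply_of_mem_lpMeas (hT : MeasurePreserving T μ μ) {φ : Lp E p μ}
    (hφ : φ ∈ lpMeas E 𝕜 (invSigma T) p μ) : koopman 𝕜 hT φ = φ := by
  obtain ⟨ψ, hψ, hφψ⟩ := hφ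
  refine Lp.ext ?_
  calc (koopman 𝕜 hT φ : Ω → E) =ᵐ[μ] φ ∘ T := Lp.coeFn_compMeasurePreserving φ hT
    _ =ᵐ[μ] ψ ∘ T := hT.quasiMeasurePreserving.ae_eq_comp hφψ
    _ = ψ := funext hψ.apply_eq_of_invSigma
    _ =ᵐ[μ] φ := hφψ.symm

end Koopman

theorem expCovInv_eq_inner {μ : Measure Ω} [IsFiniteMeasure μ] (hT : MeasurePreserving T μ μ)
    {f g : Ω → ℂ} (hf : MemLp f 2 μ) (hg : MemLp g 2 μ) (n : ℕ) :
    expCovInv μ T f g n = ⟪hf.toLp f, (koopman ℂ hT ^ n) (hg.toLp g)⟫_ℂ -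
      ⟪(lpMeas ℂ ℂ (invSigma T) 2 μ).starProjection (hf.toLp f),
        (lpMeas ℂ ℂ (invSigma T) 2 μ).starProjection (hg.toLp g)⟫_ℂ := by
  rw [expCovInv,
    integral_conj_mul_eq_inner hf.coeFn_toLp (coeFn_koopman_pow_toLp (𝕜 := ℂ) hT n hg),
    integral_conj_mul_eq_inner (hf.condExpL2_ae_eq_condExp (𝕜 := ℂ) invSigma_le)
      (hg.condExpL2_ae_eq_condExp (𝕜 := ℂ) invSigma_le)]
  -- `condExpL2` is by definition the orthogonal projection onto `lpMeas`.
  rfl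

end MeasureTheory

theorem expCovInv_self_tendsto_zero_imp
    {Ω : Type*} [MeasurableSpace Ω] (μ : Measure Ω) [IsProbabilityMeasure μ]
    (T : Ω → Ω) (hT : MeasurePreserving T μ μ)
    (f : Ω → ℂ) (hf : MemLp f 2 μ)
    (hff : Tendsto (fun n : ℕ => expCovInv μ T f f n) atTop (𝓝 0))
    (g : Ω → ℂ) (hg : MemLp g 2 μ) :
    Tendsto (fun n : ℕ => expCovInv μ T f g n) atTop (𝓝 0) := by
  rw [funext (expCovInv_eq_inner hT hf hg)]
  rw [funext (expCovInv_eq_inner hT hf hf)] at hff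
  exact ContinuousLinearMap.tendsto_inner_pow_apply_sub_inner_starProjection
    (norm_koopman_apply hT) (K := lpMeas ℂ ℂ (invSigma T) 2 μ)
    (fun _ hφ => koopman_apply_of_mem_lpMeas hT hφ) hff _

end
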